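/- arXiv:2011.13908 — 5 statements merged into one kernel-verified Lean document; each statement's English description precedes it below -/
import Mathlib

section
/- For a Poisson random variable with mean b (b a positive integer), E[min{Pois(b), b}] = b(1 - e^{-b} b^{b-1}/(b-1)!). Equivalently, (1/b)·E[min{Pois(b),b}] = 1 - e^{-b} b^{b-1}/(b-1)!. -/
open Real

/-- pmf of a Poisson random variable with mean `μ` at `k`. -/
noncomputable def poissonPMF (μ : ℝ) (k : ℕ) : ℝ :=
  Real.exp (-μ) * μ ^ k / (Nat.factorial k)

/-- `E[min{Pois(μ), c}]` for a real cap `c`. -/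
noncomputable def expMinPois (μ : ℝ) (c : ℝ) : ℝ :=
  ∑' k : ℕ, poissonPMF μ k * min (k : ℝ) c

/-!
With `p k` the weights of `X ~ Pois(μ)` and a natural cap `b`, splitting the series at `b` gives
`E[min{X, b}] = ∑_{k<b} k p k + b (1 - ∑_{k<b} p k)`. The recursion `(k + 1) p (k + 1) = μ p k`
turns the first sum into `μ ∑_{k<b-1} p k`, and for `μ = b` everything cancels except
`b (1 - p (b - 1))`.
-/

open Finset

theorem hasSum_poissonPMF (μ : ℝ) : HasSum (poissonPMF μ) 1 := by
  have h := (NormedSpace.expSeries_div_hasSum_exp μ).mul_left (exp (-μ))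
  rw [← exp_eq_exp_ℝ, ← exp_add, neg_add_cancel, exp_zero] at h
  unfold poissonPMF
  simpa only [mul_div_assoc] using h

theorem succ_mul_poissonPMF_succ (μ : ℝ) (k : ℕ) :
    (k + 1 : ℝ) * poissonPMF μ (k + 1) = μ * poissonPMF μ k := by
  simp only [poissonPMF, Nat.factorial_succ, Nat.cast_mul, Nat.cast_succ, pow_succ]
  field_simp

theorem sum_range_succ_mul_poissonPMF (μ : ℝ) (n : ℕ) :
    ∑ k ∈ range (n + 1), (k : ℝ) * poissonPMF μ k = μ * ∑ k ∈ range n, poissonPMF μ k := by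
  rw [sum_range_succ', mul_sum]
  push_cast
  simp only [succ_mul_poissonPMF_succ, zero_mul, add_zero]

theorem expMinPois_natCast (μ : ℝ) (n : ℕ) :
    expMinPois μ n
      = ∑ k ∈ range n, (k : ℝ) * poissonPMF μ k + n * (1 - ∑ k ∈ range n, poissonPMF μ k) := by
  set f : ℕ → ℝ := fun k => poissonPMF μ k * min (k : ℝ) n
  have tail : HasSum (fun k => f (k + n)) (n * (1 - ∑ k ∈ range n, poissonPMF μ k)) := by
    have tail_eq : (fun k => f (k + n)) = fun k => n * poissonPMF μ (k + n) := by
      funext k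
      dsimp only [f]
      rw [min_eq_right (Nat.cast_le.mpr (Nat.le_add_left n k)), mul_comm]
    rw [tail_eq]
    exact ((hasSum_nat_add_iff' n).mpr (hasSum_poissonPMF μ)).mul_left (n : ℝ)
  rw [expMinPois, ((hasSum_nat_add_iff n).mp tail).tsum_eq, add_comm]
  refine congrArg (· + _) (sum_congr rfl fun k hk => ?_)
  dsimp only [f]
  rw [min_eq_left (Nat.cast_le.mpr (mem_range.mp hk).le), mul_comm]

theorem stmt_0 (b : ℕ) (hb : 0 < b) :
    expMinPois (b : ℝ) (b : ℝ)
      = (b : ℝ) * (1 - Real.exp (-(b : ℝ)) * (b : ℝ) ^ (b - 1) / (Nat.factorial (b - 1))) := by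
  obtain ⟨n, rfl⟩ := Nat.exists_eq_add_of_lt hb
  rw [expMinPois_natCast, zero_add, sum_range_succ_mul_poissonPMF, sum_range_succ,
    Nat.add_sub_cancel, poissonPMF]
  ring
end

section
/- For every fixed real s > 0, the quantity E[min{Pois(b/s), b}]/b is nondecreasing in the positive integer b. -/
open Real

private lemma tsum_pow_div_factorial' (x : ℝ) :
    ∑' n : ℕ, x ^ n / (Nat.factorial n : ℝ) = Real.exp x := by
  rw [Real.exp_eq_exp_ℝ, NormedSpace.exp_eq_tsum_div]

private lemma sum_pow_div_factorial_mul (x y : ℝ) (n : ℕ) :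
    ∑ k ∈ Finset.range (n + 1),
        x ^ k / (Nat.factorial k : ℝ) * (y ^ (n - k) / (Nat.factorial (n - k) : ℝ))
      = (x + y) ^ n / (Nat.factorial n : ℝ) := by
  rw [add_pow, Finset.sum_div]
  refine Finset.sum_congr rfl fun k hk => ?_
  have hk' : k ≤ n := Nat.lt_succ_iff.mp (Finset.mem_range.mp hk)
  have h : ((n.choose k : ℕ) : ℝ) * (Nat.factorial k : ℝ) * (Nat.factorial (n - k) : ℝ)
      = (Nat.factorial n : ℝ) := by
    exact_mod_cast congrArg (Nat.cast : ℕ → ℝ) (Nat.choose_mul_factorial_mul_factorial hk')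
  have h1 : (Nat.factorial k : ℝ) ≠ 0 := Nat.cast_ne_zero.mpr k.factorial_ne_zero
  have h2 : (Nat.factorial (n - k) : ℝ) ≠ 0 := Nat.cast_ne_zero.mpr (n - k).factorial_ne_zero
  have h3 : (Nat.factorial n : ℝ) ≠ 0 := Nat.cast_ne_zero.mpr n.factorial_ne_zero
  field_simp
  linear_combination (-(x ^ k * y ^ (n - k))) * h

theorem stmt_3 (s : ℝ) (hs : 0 < s) (b b' : ℕ) (hb : 1 ≤ b) (hbb' : b ≤ b') :
    expMinPois ((b : ℝ) / s) (b : ℝ) / (b : ℝ)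
      ≤ expMinPois ((b' : ℝ) / s) (b' : ℝ) / (b' : ℝ) := by
  have hb0 : (0 : ℝ) < (b : ℝ) := by exact_mod_cast hb
  have hbb : (b : ℝ) ≤ (b' : ℝ) := by exact_mod_cast hbb'
  have hb'0 : (0 : ℝ) < (b' : ℝ) := lt_of_lt_of_le hb0 hbb
  set B : ℝ := (b : ℝ) with hB
  set B' : ℝ := (b' : ℝ) with hB'
  set lam : ℝ := B' / s with hlamdef
  set p : ℝ := B / B' with hpdef
  set q : ℝ := 1 - p with hqdef
  have hlam0 : 0 ≤ lam := le_of_lt (div_pos hb'0 hs)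
  have hp0 : 0 ≤ p := le_of_lt (div_pos hb0 hb'0)
  have hp1 : p ≤ 1 := (div_le_one hb'0).mpr hbb
  have hq0 : 0 ≤ q := by simp only [hqdef]; linarith
  have hx0 : 0 ≤ p * lam := mul_nonneg hp0 hlam0
  have hy0 : 0 ≤ q * lam := mul_nonneg hq0 hlam0
  have hxy : p * lam + q * lam = lam := by rw [hqdef]; ring
  have hpB' : p * B' = B := by
    rw [hpdef]; field_simp
  have hBs : B / s = p * lam := by
    rw [hpdef, hlamdef]; field_simp
  set f : ℕ → ℝ := fun m => (p * lam) ^ m / (Nat.factorial m : ℝ) * min (m : ℝ) B with hf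
  set g : ℕ → ℝ := fun j => (q * lam) ^ j / (Nat.factorial j : ℝ) with hg
  have hfnn : ∀ m, 0 ≤ f m := fun m =>
    mul_nonneg (div_nonneg (pow_nonneg hx0 m) (Nat.cast_nonneg _))
      (le_min (Nat.cast_nonneg _) (le_of_lt hb0))
  have hgnn : ∀ j, 0 ≤ g j := fun j =>
    div_nonneg (pow_nonneg hy0 j) (Nat.cast_nonneg _)
  have hgs : Summable g := Real.summable_pow_div_factorial _
  have hfs : Summable f := by
    refine Summable.of_nonneg_of_le hfnn (fun m => ?_)
      ((Real.summable_pow_div_factorial (p * lam)).mul_right B)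
    exact mul_le_mul_of_nonneg_left (min_le_right _ _)
      (div_nonneg (pow_nonneg hx0 m) (Nat.cast_nonneg _))
  have hfn : Summable fun m => ‖f m‖ :=
    hfs.congr fun m => (Real.norm_of_nonneg (hfnn m)).symm
  have hgn : Summable fun j => ‖g j‖ :=
    hgs.congr fun j => (Real.norm_of_nonneg (hgnn j)).symm
  set S : ℕ → ℝ := fun n => ∑ k ∈ Finset.range (n + 1), f k * g (n - k) with hS
  have hSsum : Summable S := (summable_norm_sum_mul_range_of_summable_norm hfn hgn).of_norm
  have hCauchy : (∑' m, f m) * (∑' j, g j) = ∑' n, S n :=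
    tsum_mul_tsum_eq_tsum_sum_range_of_summable_norm hfn hgn
  have hg_exp : (∑' j, g j) = Real.exp (q * lam) := tsum_pow_div_factorial' _
  have h1 : expMinPois (B / s) B = Real.exp (-(p * lam)) * ∑' m, f m := by
    rw [hBs, ← tsum_mul_left]
    exact tsum_congr fun m => by simp only [expMinPois, poissonPMF, hf]; ring
  -- pointwise bound on S
  have hSle : ∀ n : ℕ, S n ≤ p * min (n : ℝ) B' * (lam ^ n / (Nat.factorial n : ℝ)) := by
    intro n
    have key1 : S n ≤ B * (lam ^ n / (Nat.factorial n : ℝ)) := by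
      have : S n ≤ ∑ k ∈ Finset.range (n + 1),
          B * ((p * lam) ^ k / (Nat.factorial k : ℝ) * g (n - k)) := by
        refine Finset.sum_le_sum fun k _ => ?_
        have : f k * g (n - k) ≤ ((p * lam) ^ k / (Nat.factorial k : ℝ) * B) * g (n - k) := by
          refine mul_le_mul_of_nonneg_right ?_ (hgnn _)
          exact mul_le_mul_of_nonneg_left (min_le_right _ _)
            (div_nonneg (pow_nonneg hx0 k) (Nat.cast_nonneg _))
        linarith [this]
      calc S n ≤ _ := this
        _ = B * ∑ k ∈ Finset.range (n + 1),
            (p * lam) ^ k / (Nat.factorial k : ℝ)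
              * ((q * lam) ^ (n - k) / (Nat.factorial (n - k) : ℝ)) := by
          rw [Finset.mul_sum]
        _ = B * (lam ^ n / (Nat.factorial n : ℝ)) := by
          rw [sum_pow_div_factorial_mul, hxy]
    cases n with
    | zero =>
      have : S 0 = 0 := by
        simp [hS, hf, min_eq_left (le_of_lt hb0)]
      rw [this]
      exact mul_nonneg (mul_nonneg hp0 (le_min (by norm_num) (le_of_lt hb'0)))
        (div_nonneg (pow_nonneg hlam0 0) (Nat.cast_nonneg _))
    | succ n =>
      rcases le_total ((n + 1 : ℕ) : ℝ) B' with hmin | hmin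
      · -- use the mean bound
        have key2 : S (n + 1) ≤ (p * lam) * (lam ^ n / (Nat.factorial n : ℝ)) := by
          have hzero : f 0 * g (n + 1 - 0) = 0 := by
            simp [hf, min_eq_left (le_of_lt hb0)]
          show ∑ k ∈ Finset.range (n + 1 + 1), f k * g (n + 1 - k) ≤ _
          rw [Finset.sum_range_succ']
          rw [hzero, add_zero]
          have hstep : ∀ k ∈ Finset.range (n + 1), f (k + 1) * g (n + 1 - (k + 1))
              ≤ (p * lam) * ((p * lam) ^ k / (Nat.factorial k : ℝ)
                * ((q * lam) ^ (n - k) / (Nat.factorial (n - k) : ℝ))) := by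
            intro k _
            have hmk : min ((k + 1 : ℕ) : ℝ) B ≤ ((k + 1 : ℕ) : ℝ) := min_le_left _ _
            have hfk : f (k + 1) ≤ (p * lam) * ((p * lam) ^ k / (Nat.factorial k : ℝ)) := by
              have heq : (p * lam) ^ (k + 1) / (Nat.factorial (k + 1) : ℝ) * ((k + 1 : ℕ) : ℝ)
                  = (p * lam) * ((p * lam) ^ k / (Nat.factorial k : ℝ)) := by
                rw [Nat.factorial_succ, pow_succ]
                have h1 : (Nat.factorial k : ℝ) ≠ 0 := Nat.cast_ne_zero.mpr k.factorial_ne_zero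
                have h2 : ((k + 1 : ℕ) : ℝ) ≠ 0 := by positivity
                push_cast
                field_simp
              calc f (k + 1) ≤ (p * lam) ^ (k + 1) / (Nat.factorial (k + 1) : ℝ)
                    * ((k + 1 : ℕ) : ℝ) :=
                  mul_le_mul_of_nonneg_left hmk
                    (div_nonneg (pow_nonneg hx0 _) (Nat.cast_nonneg _))
                _ = _ := heq
            have hsimp : n + 1 - (k + 1) = n - k := by omega
            rw [hsimp]
            calc f (k + 1) * g (n - k)
                ≤ ((p * lam) * ((p * lam) ^ k / (Nat.factorial k : ℝ))) * g (n - k) :=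
                  mul_le_mul_of_nonneg_right hfk (hgnn _)
              _ = (p * lam) * ((p * lam) ^ k / (Nat.factorial k : ℝ)
                  * ((q * lam) ^ (n - k) / (Nat.factorial (n - k) : ℝ))) := by
                  rw [hg]; ring
          calc ∑ k ∈ Finset.range (n + 1), f (k + 1) * g (n + 1 - (k + 1))
              ≤ ∑ k ∈ Finset.range (n + 1), (p * lam) * ((p * lam) ^ k / (Nat.factorial k : ℝ)
                * ((q * lam) ^ (n - k) / (Nat.factorial (n - k) : ℝ))) :=
              Finset.sum_le_sum hstep
            _ = (p * lam) * (lam ^ n / (Nat.factorial n : ℝ)) := by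
              rw [← Finset.mul_sum, sum_pow_div_factorial_mul, hxy]
        have hminval : min (((n + 1 : ℕ)) : ℝ) B' = ((n + 1 : ℕ) : ℝ) := min_eq_left hmin
        rw [hminval]
        have : p * ((n + 1 : ℕ) : ℝ) * (lam ^ (n + 1) / (Nat.factorial (n + 1) : ℝ))
            = (p * lam) * (lam ^ n / (Nat.factorial n : ℝ)) := by
          rw [Nat.factorial_succ, pow_succ]
          have h1 : (Nat.factorial n : ℝ) ≠ 0 := Nat.cast_ne_zero.mpr n.factorial_ne_zero
          have h2 : ((n + 1 : ℕ) : ℝ) ≠ 0 := by positivity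
          push_cast
          field_simp
        rw [this]
        exact key2
      · have hminval : min (((n + 1 : ℕ)) : ℝ) B' = B' := min_eq_right hmin
        rw [hminval]
        calc S (n + 1) ≤ B * (lam ^ (n + 1) / (Nat.factorial (n + 1) : ℝ)) := key1
          _ = p * B' * (lam ^ (n + 1) / (Nat.factorial (n + 1) : ℝ)) := by rw [hpB']
  -- assemble
  have hfromCauchy : ∑' m, f m = Real.exp (-(q * lam)) * ∑' n, S n := by
    have hne : Real.exp (q * lam) ≠ 0 := Real.exp_ne_zero _
    have := hCauchy
    rw [hg_exp] at this
    rw [← this, Real.exp_neg]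
    field_simp
  have hmain : expMinPois (B / s) B = Real.exp (-lam) * ∑' n, S n := by
    rw [h1, hfromCauchy, ← mul_assoc, ← Real.exp_add]
    congr 2
    rw [← hxy]; ring
  set h : ℕ → ℝ := fun n => min (n : ℝ) B' * (lam ^ n / (Nat.factorial n : ℝ)) with hh
  have hhnn : ∀ n, 0 ≤ h n := fun n =>
    mul_nonneg (le_min (Nat.cast_nonneg _) (le_of_lt hb'0))
      (div_nonneg (pow_nonneg hlam0 n) (Nat.cast_nonneg _))
  have hhs : Summable h := by
    refine Summable.of_nonneg_of_le hhnn (fun n => ?_)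
      ((Real.summable_pow_div_factorial lam).mul_left B')
    exact mul_le_mul_of_nonneg_right (min_le_right _ _)
      (div_nonneg (pow_nonneg hlam0 n) (Nat.cast_nonneg _))
  have hRHSsum : Summable (fun n => p * h n) := hhs.mul_left p
  have htsumle : ∑' n, S n ≤ ∑' n, p * h n := by
    refine Summable.tsum_le_tsum (fun n => ?_) hSsum hRHSsum
    have := hSle n
    rw [hh]
    linarith [this]
  have hexp' : expMinPois lam B' = Real.exp (-lam) * ∑' n, h n := by
    rw [← tsum_mul_left]
    exact tsum_congr fun n => by simp only [expMinPois, poissonPMF, hh]; ring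
  have hfinal : expMinPois (B / s) B ≤ p * expMinPois lam B' := by
    calc expMinPois (B / s) B = Real.exp (-lam) * ∑' n, S n := hmain
      _ ≤ Real.exp (-lam) * ∑' n, p * h n :=
        mul_le_mul_of_nonneg_left htsumle (le_of_lt (Real.exp_pos _))
      _ = p * (Real.exp (-lam) * ∑' n, h n) := by rw [tsum_mul_left]; ring
      _ = p * expMinPois lam B' := by rw [hexp']
  have : expMinPois (B / s) B / B ≤ (p * expMinPois lam B') / B :=
    (div_le_div_iff_of_pos_right hb0).mpr hfinal
  calc expMinPois (B / s) B / B ≤ (p * expMinPois lam B') / B := this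
    _ = expMinPois lam B' / B' := by
      rw [hpdef]
      field_simp
end

section
/- Let b be a positive integer. Then for any rate μ > 0, ∫₀¹ μ·P[Pois(μt) < b] dt = E[min{Pois(μ), b}]. -/
open Real

/-- `P[Pois(μ) < b]` for a natural-number threshold `b`. -/
noncomputable def poisProbLt (μ : ℝ) (b : ℕ) : ℝ :=
  ∑ k ∈ Finset.range b, poissonPMF μ k

lemma pmf_summable (μ : ℝ) : Summable (fun k => poissonPMF μ k) := by
  simpa [poissonPMF, mul_div_assoc] using
    (Real.summable_pow_div_factorial μ).mul_left (Real.exp (-μ))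

lemma pmf_tsum (μ : ℝ) : ∑' k, poissonPMF μ k = 1 := by
  simp only [poissonPMF, mul_div_assoc]
  rw [tsum_mul_left]
  have : ∑' k : ℕ, μ ^ k / (Nat.factorial k : ℝ) = Real.exp μ := by
    rw [Real.exp_eq_exp_ℝ, NormedSpace.exp_eq_tsum_div]
  rw [this, ← Real.exp_add]
  simp

lemma pmf_nonneg (μ : ℝ) (hμ : 0 ≤ μ) (k : ℕ) : 0 ≤ poissonPMF μ k := by
  unfold poissonPMF; positivity

/-- derivative of `t ↦ poissonPMF (μ*t) j` -/
lemma pmf_hasDerivAt (μ : ℝ) (j : ℕ) (t : ℝ) :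
    HasDerivAt (fun t => poissonPMF (μ * t) j)
      ((Real.exp (-(μ*t)) * (-μ) * (μ*t)^j
        + Real.exp (-(μ*t)) * ((j:ℝ) * (μ*t)^(j-1) * μ)) / (Nat.factorial j)) t := by
  have h0 : HasDerivAt (fun t : ℝ => μ * t) μ t := by
    simpa using (hasDerivAt_id t).const_mul μ
  have h1 : HasDerivAt (fun t : ℝ => -(μ * t)) (-μ) t := h0.neg
  have h2 := h1.exp
  have h3 : HasDerivAt (fun t : ℝ => (μ * t)^j) ((j:ℝ) * (μ*t)^(j-1) * μ) t := h0.pow j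
  simpa [poissonPMF] using (h2.mul h3).div_const (Nat.factorial j : ℝ)

lemma sum_deriv_eq (μ t : ℝ) (k : ℕ) :
    ∑ j ∈ Finset.range (k+1),
      (Real.exp (-(μ*t)) * (-μ) * (μ*t)^j
        + Real.exp (-(μ*t)) * ((j:ℝ) * (μ*t)^(j-1) * μ)) / (Nat.factorial j)
      = -(μ * poissonPMF (μ*t) k) := by
  induction k with
  | zero => simp [poissonPMF]; ring
  | succ n ih =>
    rw [Finset.sum_range_succ, ih]
    have hf : (Nat.factorial n : ℝ) ≠ 0 := by positivity
    simp only [poissonPMF, Nat.factorial_succ, Nat.succ_sub_one]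
    push_cast
    field_simp
    ring

lemma partial_hasDerivAt (μ : ℝ) (k : ℕ) (t : ℝ) :
    HasDerivAt (fun t => -(∑ j ∈ Finset.range (k+1), poissonPMF (μ * t) j))
      (μ * poissonPMF (μ*t) k) t := by
  have h := HasDerivAt.fun_sum (u := Finset.range (k+1))
    (fun j _ => pmf_hasDerivAt μ j t)
  rw [sum_deriv_eq] at h
  simpa using h.fun_neg

lemma integral_pmf (μ : ℝ) (k : ℕ) :
    ∫ t in (0:ℝ)..1, μ * poissonPMF (μ * t) k
      = 1 - ∑ j ∈ Finset.range (k+1), poissonPMF μ j := by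
  have hc : Continuous (fun t : ℝ => μ * poissonPMF (μ * t) k) := by
    unfold poissonPMF; fun_prop
  have := intervalIntegral.integral_eq_sub_of_hasDerivAt
    (f := fun t => -(∑ j ∈ Finset.range (k+1), poissonPMF (μ * t) j))
    (f' := fun t => μ * poissonPMF (μ * t) k)
    (fun t _ => partial_hasDerivAt μ k t) (hc.intervalIntegrable 0 1)
  have h0 : ∑ j ∈ Finset.range (k+1), poissonPMF (μ * 0) j = 1 := by
    rw [Finset.sum_eq_single 0]
    · simp [poissonPMF]
    · intro j _ hj; simp [poissonPMF, zero_pow hj]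
    · simp
  simp only [mul_one] at this
  rw [this, h0]
  ring

lemma min_eq_sum_ite (k b : ℕ) :
    min (k : ℝ) (b : ℝ) = ∑ i ∈ Finset.range b, (if i < k then (1:ℝ) else 0) := by
  induction b with
  | zero => simp
  | succ n ih =>
    rw [Finset.sum_range_succ, ← ih]
    rcases le_or_gt k n with h | h
    · rw [if_neg (by omega)]
      rw [min_eq_left (by exact_mod_cast h.trans (Nat.le_succ n)),
        min_eq_left (by exact_mod_cast h)]
      ring
    · rw [if_pos h]
      rw [min_eq_right (by exact_mod_cast h), min_eq_right (by exact_mod_cast h.le)]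
      push_cast; ring

lemma ite_summable (μ : ℝ) (hμ : 0 ≤ μ) (i : ℕ) :
    Summable (fun k => poissonPMF μ k * (if i < k then (1:ℝ) else 0)) := by
  apply Summable.of_nonneg_of_le (fun k => ?_) (fun k => ?_) (pmf_summable μ)
  · split_ifs <;> simp [pmf_nonneg μ hμ]
  · split_ifs <;> simp [pmf_nonneg μ hμ, le_refl]

lemma tsum_tail (μ : ℝ) (hμ : 0 ≤ μ) (i : ℕ) :
    ∑' k, poissonPMF μ k * (if i < k then (1:ℝ) else 0)
      = 1 - ∑ j ∈ Finset.range (i+1), poissonPMF μ j := by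
  have hs := ite_summable μ hμ i
  have h1 := Summable.sum_add_tsum_nat_add (i+1) hs
  have h2 := Summable.sum_add_tsum_nat_add (i+1) (pmf_summable μ)
  have e1 : ∑ j ∈ Finset.range (i+1), poissonPMF μ j * (if i < j then (1:ℝ) else 0) = 0 := by
    apply Finset.sum_eq_zero
    intro j hj
    rw [if_neg (by simp at hj; omega), mul_zero]
  have e2 : (fun k => poissonPMF μ (k + (i+1)) * (if i < k + (i+1) then (1:ℝ) else 0))
      = fun k => poissonPMF μ (k + (i+1)) := by
    funext k; rw [if_pos (by omega), mul_one]
  rw [e1, zero_add, e2] at h1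
  rw [h1, pmf_tsum] at *
  linarith [h2, pmf_tsum μ]

theorem stmt_6 (μ : ℝ) (hμ : 0 < μ) (b : ℕ) (hb : 0 < b) :
    ∫ t in (0:ℝ)..1, μ * poisProbLt (μ * t) b = expMinPois μ (b : ℝ) := by
  have hlhs : ∫ t in (0:ℝ)..1, μ * poisProbLt (μ * t) b
      = ∑ k ∈ Finset.range b, (1 - ∑ j ∈ Finset.range (k+1), poissonPMF μ j) := by
    have he : ∀ t : ℝ, μ * poisProbLt (μ * t) b
        = ∑ k ∈ Finset.range b, μ * poissonPMF (μ * t) k := by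
      intro t; rw [poisProbLt, Finset.mul_sum]
    simp only [he]
    rw [intervalIntegral.integral_finset_sum]
    · exact Finset.sum_congr rfl fun k _ => integral_pmf μ k
    · intro k _
      have hc : Continuous (fun t : ℝ => μ * poissonPMF (μ * t) k) := by
        unfold poissonPMF; fun_prop
      exact hc.intervalIntegrable 0 1
  have hrhs : expMinPois μ (b : ℝ)
      = ∑ i ∈ Finset.range b, (1 - ∑ j ∈ Finset.range (i+1), poissonPMF μ j) := by
    rw [expMinPois]
    have he : ∀ k : ℕ, poissonPMF μ k * min (k : ℝ) (b : ℝ)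
        = ∑ i ∈ Finset.range b, poissonPMF μ k * (if i < k then (1:ℝ) else 0) := by
      intro k; rw [min_eq_sum_ite, Finset.mul_sum]
    simp only [he]
    rw [Summable.tsum_finsetSum (fun i _ => ite_summable μ hμ.le i)]
    exact Finset.sum_congr rfl fun i _ => tsum_tail μ hμ.le i
  rw [hlhs, hrhs]
end

section
/- For every integer b ≥ 2 and all λ ∈ (0,1], (λ^b/b!)/(Σ_{k=b}^∞ λ^k/(k·k!)) ≥ 1/(Σ_{k=2}^∞ 2/(k·k!)) > 1; in particular the increment ratio (P[Pois(λ)=b]) / (Σ_{k=b}^∞ P[Pois(λ)=k]/k) ≥ 1. -/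
open Real

lemma factNat1 (b : ℕ) (hb : 2 ≤ b) (k : ℕ) :
    (k+2).factorial * b.factorial ≤ 2 * (b+k).factorial := by
  induction k with
  | zero => simp [Nat.factorial]
  | succ k ih =>
    have h1 : k + 3 ≤ b + k + 1 := by omega
    have e1 : (k+1+2).factorial = (k+3) * (k+2).factorial := rfl
    have e2 : (b+(k+1)).factorial = (b+k+1) * (b+k).factorial := by
      have : b + (k+1) = (b+k) + 1 := by omega
      rw [this]; rfl
    calc (k+1+2).factorial * b.factorial
        = (k+3) * ((k+2).factorial * b.factorial) := by rw [e1]; ring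
      _ ≤ (b+k+1) * (2 * (b+k).factorial) := Nat.mul_le_mul h1 ih
      _ = 2 * (b+(k+1)).factorial := by rw [e2]; ring

lemma factNat2 (k : ℕ) : 2^(k+2) ≤ (k+2) * (k+2).factorial := by
  induction k with
  | zero => simp [Nat.factorial]
  | succ k ih =>
    have h2 : 2*(k+2) ≤ (k+3)*(k+3) := by nlinarith
    have e1 : (k+1+2).factorial = (k+3) * (k+2).factorial := rfl
    calc 2^(k+1+2) = 2 * 2^(k+2) := by ring
      _ ≤ 2 * ((k+2) * (k+2).factorial) := Nat.mul_le_mul_left _ ih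
      _ = (2*(k+2)) * (k+2).factorial := by ring
      _ ≤ ((k+3)*(k+3)) * (k+2).factorial := Nat.mul_le_mul_right _ h2
      _ = (k+1+2) * (k+1+2).factorial := by rw [e1]; ring

lemma factNat3 (k : ℕ) : 2 * 3^(k+2) ≤ (k+3) * (k+3).factorial := by
  induction k with
  | zero => simp [Nat.factorial]
  | succ k ih =>
    have h2 : 3*(k+3) ≤ (k+4)*(k+4) := by nlinarith
    have e1 : (k+1+3).factorial = (k+4) * (k+3).factorial := rfl
    calc 2 * 3^(k+1+2) = 3 * (2 * 3^(k+2)) := by ring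
      _ ≤ 3 * ((k+3) * (k+3).factorial) := Nat.mul_le_mul_left _ ih
      _ = (3*(k+3)) * (k+3).factorial := by ring
      _ ≤ ((k+4)*(k+4)) * (k+3).factorial := Nat.mul_le_mul_right _ h2
      _ = (k+1+3) * (k+1+3).factorial := by rw [e1]; ring

theorem stmt_12 (b : ℕ) (hb : 2 ≤ b) (lam : ℝ) (hlam0 : 0 < lam) (hlam1 : lam ≤ 1) :
    (∑' k : ℕ, (Nat.factorial b : ℝ) / ((b + k) * Nat.factorial (b + k)))
        ≤ (∑' k : ℕ, (2 : ℝ) / ((k + 2) * Nat.factorial (k + 2))) ∧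
    (∑' k : ℕ, (2 : ℝ) / ((k + 2) * Nat.factorial (k + 2))) < 1 ∧
    poissonPMF lam b ≥ ∑' k : ℕ, poissonPMF lam (b + k) / (b + k) := by
  set g : ℕ → ℝ := fun k => (2 : ℝ) / ((k + 2) * Nat.factorial (k + 2)) with hg
  set f : ℕ → ℝ := fun k => (Nat.factorial b : ℝ) / ((b + k) * Nat.factorial (b + k)) with hf
  have hg_eq : ∀ k, g k = 2 / (((k+2) * (k+2).factorial : ℕ) : ℝ) := by
    intro k; simp only [hg]; push_cast; ring
  have hf_eq : ∀ k, f k = (b.factorial : ℝ) / (((b+k) * (b+k).factorial : ℕ) : ℝ) := by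
    intro k; simp only [hf]; push_cast; ring
  have hDg_pos : ∀ k, (0:ℝ) < (((k+2) * (k+2).factorial : ℕ) : ℝ) := by
    intro k
    have : 0 < (k+2) * (k+2).factorial := Nat.mul_pos (by omega) (Nat.factorial_pos _)
    exact_mod_cast this
  have hDf_pos : ∀ k, (0:ℝ) < (((b+k) * (b+k).factorial : ℕ) : ℝ) := by
    intro k
    have : 0 < (b+k) * (b+k).factorial := Nat.mul_pos (by omega) (Nat.factorial_pos _)
    exact_mod_cast this
  have hg_nonneg : ∀ k, 0 ≤ g k := by
    intro k; rw [hg_eq]; positivity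
  have hf_nonneg : ∀ k, 0 ≤ f k := by
    intro k; rw [hf_eq]; positivity
  -- termwise f ≤ g
  have hfg : ∀ k, f k ≤ g k := by
    intro k
    rw [hf_eq, hg_eq, div_le_div_iff₀ (hDf_pos k) (hDg_pos k)]
    have h1 := factNat1 b hb k
    have h2 : (k + 2 : ℕ) ≤ b + k := by omega
    have key : (b.factorial) * ((k+2) * (k+2).factorial) ≤ 2 * ((b+k) * (b+k).factorial) := by
      calc b.factorial * ((k+2) * (k+2).factorial)
          = (k+2) * ((k+2).factorial * b.factorial) := by ring
        _ ≤ (b+k) * (2 * (b+k).factorial) := Nat.mul_le_mul h2 h1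
        _ = 2 * ((b+k) * (b+k).factorial) := by ring
    exact_mod_cast key
  -- summability of g
  have hg_le : ∀ k, g k ≤ (1/2 : ℝ)^k := by
    intro k
    rw [hg_eq]
    have h : 2 * 2^k ≤ (k+2) * (k+2).factorial := by
      calc 2 * 2^k ≤ 4 * 2^k := by nlinarith [pow_pos (by norm_num : (0:ℕ) < 2) k]
        _ = 2^(k+2) := by ring
        _ ≤ (k+2) * (k+2).factorial := factNat2 k
    have h' : (2:ℝ) * 2^k ≤ (((k+2) * (k+2).factorial : ℕ) : ℝ) := by exact_mod_cast h
    rw [div_pow, one_pow, div_le_div_iff₀ (hDg_pos k) (by positivity)]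
    calc (2:ℝ) * 2^k ≤ (((k+2) * (k+2).factorial : ℕ) : ℝ) := h'
      _ = 1 * (((k+2) * (k+2).factorial : ℕ) : ℝ) := by ring
  have hg_sum : Summable g :=
    Summable.of_nonneg_of_le hg_nonneg hg_le
      (summable_geometric_of_lt_one (by norm_num) (by norm_num))
  have hf_sum : Summable f := Summable.of_nonneg_of_le hf_nonneg hfg hg_sum
  have part1 : (∑' k, f k) ≤ ∑' k, g k := Summable.tsum_le_tsum hfg hf_sum hg_sum
  -- part 2
  have hgtail : ∀ k : ℕ, g (k+1) ≤ (1/9 : ℝ) * (1/3)^k := by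
    intro k
    have e : k+1+2 = k+3 := rfl
    rw [hg_eq, e]
    have h : (2:ℝ) * 3^(k+2) ≤ (((k+3) * (k+3).factorial : ℕ) : ℝ) := by
      exact_mod_cast factNat3 k
    have hr : (1/9:ℝ) * (1/3)^k = 2 / (2 * 3^(k+2)) := by
      rw [div_pow, one_pow, pow_add]
      field_simp
      ring
    rw [hr]
    gcongr
  have hgtail_sum : Summable (fun k => g (k+1)) := (summable_nat_add_iff 1).mpr hg_sum
  have hgeo_sum : Summable (fun k : ℕ => (1/9 : ℝ) * (1/3)^k) :=
    (summable_geometric_of_lt_one (by norm_num) (by norm_num)).mul_left _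
  have htail_le : (∑' k, g (k+1)) ≤ ∑' k : ℕ, (1/9 : ℝ) * (1/3)^k :=
    Summable.tsum_le_tsum hgtail hgtail_sum hgeo_sum
  have hgeo_val : (∑' k : ℕ, (1/9 : ℝ) * (1/3)^k) = 1/6 := by
    rw [tsum_mul_left, tsum_geometric_of_lt_one (by norm_num) (by norm_num)]
    norm_num
  have hsplit : (∑' k, g k) = g 0 + ∑' k, g (k+1) := Summable.tsum_eq_zero_add hg_sum
  have hg0 : g 0 = 1/2 := by rw [hg_eq]; norm_num [Nat.factorial]
  have part2 : (∑' k, g k) < 1 := by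
    rw [hsplit, hg0]
    have := htail_le
    rw [hgeo_val] at this
    linarith
  refine ⟨part1, part2, ?_⟩
  -- part 3
  set P := poissonPMF lam b with hP
  have hbfac : (0:ℝ) < (Nat.factorial b : ℝ) := by
    exact_mod_cast Nat.factorial_pos b
  have hP_pos : 0 < P := by
    rw [hP]; unfold poissonPMF
    have h1 := Real.exp_pos (-lam)
    positivity
  have ht_le : ∀ k, poissonPMF lam (b + k) / ((b:ℝ) + k) ≤ P * f k := by
    intro k
    have hDf := hDf_pos k
    have hbk : (0:ℝ) < (b:ℝ) + k := by
      have h2 : (2:ℝ) ≤ (b:ℝ) := by exact_mod_cast hb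
      have hk : (0:ℝ) ≤ (k:ℝ) := Nat.cast_nonneg k
      linarith
    have hbkfac : (0:ℝ) < ((b+k).factorial : ℝ) := by exact_mod_cast Nat.factorial_pos (b+k)
    have hrhs : P * f k = Real.exp (-lam) * lam ^ b / (((b+k) * (b+k).factorial : ℕ) : ℝ) := by
      rw [hP, hf_eq]; unfold poissonPMF
      field_simp
    have hlhs : poissonPMF lam (b + k) / ((b:ℝ) + k)
        = Real.exp (-lam) * lam ^ (b+k) / (((b+k) * (b+k).factorial : ℕ) : ℝ) := by
      unfold poissonPMF
      rw [div_div]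
      push_cast
      ring_nf
    rw [hlhs, hrhs]
    have hpow : lam ^ (b+k) ≤ lam ^ b := by
      calc lam ^ (b+k) = lam ^ b * lam ^ k := pow_add lam b k
        _ ≤ lam ^ b * 1 := by
            have := pow_le_one₀ hlam0.le hlam1 (n := k)
            have hb0 : (0:ℝ) ≤ lam ^ b := by positivity
            nlinarith
        _ = lam ^ b := mul_one _
    gcongr
  have ht_nonneg : ∀ k, 0 ≤ poissonPMF lam (b + k) / ((b:ℝ) + k) := by
    intro k
    unfold poissonPMF
    have h1 : (0:ℝ) ≤ (b:ℝ) + k := by positivity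
    have h2 : (0:ℝ) < ((b+k).factorial : ℝ) := by exact_mod_cast Nat.factorial_pos (b+k)
    have h3 := Real.exp_pos (-lam)
    positivity
  have hPf_sum : Summable (fun k => P * f k) := hf_sum.mul_left P
  have ht_sum : Summable (fun k => poissonPMF lam (b + k) / ((b:ℝ) + k)) :=
    Summable.of_nonneg_of_le ht_nonneg ht_le hPf_sum
  calc (∑' k : ℕ, poissonPMF lam (b + k) / ((b:ℝ) + k))
      ≤ ∑' k, P * f k := Summable.tsum_le_tsum ht_le ht_sum hPf_sum
    _ = P * ∑' k, f k := tsum_mul_left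
    _ ≤ P * 1 := by
        have h1 : (∑' k, f k) ≤ 1 := le_of_lt (lt_of_le_of_lt part1 part2)
        exact mul_le_mul_of_nonneg_left h1 hP_pos.le
    _ = P := mul_one P
end

section
/- For a single server of capacity b serving total arrival rate λ ≤ 1, the short-run fairness of FCFS is at least 0.863 times the clairvoyant short-run fairness; that is, for all integers b ≥ 1 and λ ∈ (0,1], P[Pois(λ) ≤ b] / (P[Pois(λ) ≤ b] + Σ_{k>b} P[Pois(λ)=k]·b/k) ≥ f(1,1), where f(1,1) = 2e^{-1}/(2e^{-1} + Σ_{k=2}^∞ e^{-1}/(k!·k)) ≈ 0.863. -/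
open Real

/-- `P[Pois(μ) ≤ b]`. -/
noncomputable def poisCDF (μ : ℝ) (b : ℕ) : ℝ :=
  ∑ k ∈ Finset.range (b + 1), poissonPMF μ k

/-- Clairvoyant short-run fairness: `P[Pois(μ) ≤ b] + Σ_{k>b} P[Pois(μ)=k]·b/k`. -/
noncomputable def clairFair (μ : ℝ) (b : ℕ) : ℝ :=
  poisCDF μ b + ∑' k : ℕ, poissonPMF μ (b + 1 + k) * b / (b + 1 + k)

/-!
Write `S_b = ∑_{n > b} 1/(n!·n)`. For `λ ≤ 1`, `λ^k ≥ λ^b` when `k ≤ b` and `λ^k ≤ λ^b` when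
`k > b`; factoring out `e^{-λ} λ^b`, the FCFS probability is at least `∑_{k ≤ b} 1/k!` and the
clairvoyant surplus at most `b S_b`. Since the bound equals `2 / (2 + S_1)`, it remains to show
`2 b S_b ≤ S_1 ∑_{k ≤ b} 1/k!`. This is an equality at `b = 1`; for `b ≥ 2` a geometric bound on the
tail gives `b S_b ≤ 1/(b+1)! ≤ 1/6`, while `S_1 ≥ 1/4` and the head sum is at least `2`.
-/

open Nat Finset

noncomputable def factTail (b : ℕ) : ℝ :=
  ∑' k : ℕ, 1 / ((b + 1 + k)! * ((b + 1 + k : ℕ) : ℝ))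

lemma factTail_term_nonneg (b k : ℕ) : 0 ≤ 1 / ((b + 1 + k)! * ((b + 1 + k : ℕ) : ℝ)) := by
  positivity

lemma factTail_term_le_geometric (b k : ℕ) :
    1 / ((b + 1 + k)! * ((b + 1 + k : ℕ) : ℝ))
      ≤ 1 / ((b + 1)! * ((b + 1 : ℕ) : ℝ)) * ((b : ℝ) + 2)⁻¹ ^ k := by
  have hfact : ((b + 1)! : ℝ) * ((b : ℝ) + 2) ^ k ≤ (b + 1 + k)! := by
    exact_mod_cast (factorial_mul_pow_le_factorial (m := b + 1) (n := k))
  have hn : ((b + 1 : ℕ) : ℝ) ≤ ((b + 1 + k : ℕ) : ℝ) := by exact_mod_cast le_add_right _ _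
  rw [inv_pow, ← div_eq_mul_inv, div_div]
  refine one_div_le_one_div_of_le (by positivity) ?_
  calc ((b + 1)! : ℝ) * ((b + 1 : ℕ) : ℝ) * ((b : ℝ) + 2) ^ k
      = ((b + 1)! * ((b : ℝ) + 2) ^ k) * ((b + 1 : ℕ) : ℝ) := by ring
    _ ≤ (b + 1 + k)! * ((b + 1 + k : ℕ) : ℝ) := by gcongr

lemma hasSum_geometric_factTail_bound (b : ℕ) :
    HasSum (fun k : ℕ ↦ 1 / ((b + 1)! * ((b + 1 : ℕ) : ℝ)) * ((b : ℝ) + 2)⁻¹ ^ k)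
      (((b : ℝ) + 2) / ((b + 1)! * ((b : ℝ) + 1) ^ 2)) := by
  have hr : ((b : ℝ) + 2)⁻¹ < 1 := inv_lt_one_of_one_lt₀ (by linarith [b.cast_nonneg (α := ℝ)])
  have hsum : ((b : ℝ) + 2) / ((b + 1)! * ((b : ℝ) + 1) ^ 2)
      = 1 / ((b + 1)! * ((b + 1 : ℕ) : ℝ)) * (1 - ((b : ℝ) + 2)⁻¹)⁻¹ := by
    have h1 : (b : ℝ) + 1 ≠ 0 := by positivity
    have h2 : (b : ℝ) + 2 ≠ 0 := by positivity
    rw [show 1 - ((b : ℝ) + 2)⁻¹ = ((b : ℝ) + 1) / (b + 2) by field_simp; ring]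
    push_cast
    field_simp
  rw [hsum]
  exact (hasSum_geometric_of_lt_one (by positivity) hr).mul_left _

lemma summable_factTail (b : ℕ) :
    Summable (fun k : ℕ ↦ 1 / ((b + 1 + k)! * ((b + 1 + k : ℕ) : ℝ))) :=
  (hasSum_geometric_factTail_bound b).summable.of_nonneg_of_le (factTail_term_nonneg b)
    (factTail_term_le_geometric b)

lemma factTail_nonneg (b : ℕ) : 0 ≤ factTail b :=
  tsum_nonneg (factTail_term_nonneg b)

lemma mul_factTail_le (b : ℕ) : b * factTail b ≤ 1 / (b + 1)! := by
  have hS : factTail b ≤ ((b : ℝ) + 2) / ((b + 1)! * ((b : ℝ) + 1) ^ 2) :=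
    hasSum_le (factTail_term_le_geometric b) (summable_factTail b).hasSum
      (hasSum_geometric_factTail_bound b)
  calc (b : ℝ) * factTail b ≤ b * (((b : ℝ) + 2) / ((b + 1)! * ((b : ℝ) + 1) ^ 2)) := by gcongr
    _ ≤ 1 / (b + 1)! := by
      rw [mul_div_assoc', div_le_div_iff₀ (by positivity) (by positivity)]
      have : (b : ℝ) * (b + 2) ≤ (b + 1) ^ 2 := by nlinarith
      calc (b : ℝ) * (b + 2) * (b + 1)! ≤ (b + 1) ^ 2 * (b + 1)! := by gcongr
        _ = 1 * ((b + 1)! * ((b : ℝ) + 1) ^ 2) := by ring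

lemma one_div_four_le_factTail_one : (1 : ℝ) / 4 ≤ factTail 1 := by
  have h := (summable_factTail 1).le_tsum 0 (fun k _ ↦ factTail_term_nonneg 1 k)
  norm_num [factTail, factorial] at h ⊢
  linarith

lemma two_le_sum_range_inv_factorial {b : ℕ} (hb : 1 ≤ b) :
    2 ≤ ∑ k ∈ range (b + 1), (1 : ℝ) / k ! := by
  calc (2 : ℝ) = ∑ k ∈ range 2, (1 : ℝ) / k ! := by norm_num [sum_range_succ]
    _ ≤ _ := sum_le_sum_of_subset_of_nonneg (range_subset_range.mpr (by omega))
        (fun _ _ _ ↦ by positivity)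

lemma two_mul_factTail_le {b : ℕ} (hb : 1 ≤ b) :
    2 * b * factTail b ≤ factTail 1 * ∑ k ∈ range (b + 1), (1 : ℝ) / k ! := by
  obtain rfl | hb2 := hb.eq_or_lt
  · norm_num [sum_range_succ]
    linarith
  have hfact : (6 : ℝ) ≤ (b + 1)! := by exact_mod_cast factorial_le (m := 3) (by omega)
  calc 2 * b * factTail b ≤ 2 * (1 / (b + 1)!) := by
        rw [mul_assoc]; gcongr; exact mul_factTail_le b
    _ ≤ 1 / 4 * 2 := by
        rw [mul_one_div, div_le_iff₀ (by positivity)]; linarith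
    _ ≤ _ := mul_le_mul one_div_four_le_factTail_one (two_le_sum_range_inv_factorial hb)
        (by norm_num) (factTail_nonneg 1)

lemma exp_neg_mul_pow_mul_sum_inv_factorial_le_poisCDF {μ : ℝ} (hμ0 : 0 ≤ μ) (hμ1 : μ ≤ 1)
    (b : ℕ) :
    exp (-μ) * μ ^ b * ∑ k ∈ range (b + 1), (1 : ℝ) / k ! ≤ poisCDF μ b := by
  rw [poisCDF, mul_sum]
  refine sum_le_sum fun k hk ↦ ?_
  have hμk : μ ^ b ≤ μ ^ k := pow_le_pow_of_le_one hμ0 hμ1 (by simpa [Nat.lt_succ_iff] using hk)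
  calc exp (-μ) * μ ^ b * (1 / k !) ≤ exp (-μ) * μ ^ k * (1 / k !) := by gcongr
    _ = poissonPMF μ k := by rw [poissonPMF, mul_one_div]

lemma poissonPMF_mul_div_le {μ : ℝ} (hμ0 : 0 ≤ μ) (hμ1 : μ ≤ 1) (b k : ℕ) :
    poissonPMF μ (b + 1 + k) * b / (b + 1 + k)
      ≤ exp (-μ) * μ ^ b * b * (1 / ((b + 1 + k)! * ((b + 1 + k : ℕ) : ℝ))) := by
  have hμk : μ ^ (b + 1 + k) ≤ μ ^ b := pow_le_pow_of_le_one hμ0 hμ1 (by omega)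
  calc poissonPMF μ (b + 1 + k) * b / (b + 1 + k)
      = exp (-μ) * μ ^ (b + 1 + k) * b * (1 / ((b + 1 + k)! * ((b + 1 + k : ℕ) : ℝ))) := by
        rw [poissonPMF]; push_cast; field_simp
    _ ≤ _ := by gcongr

lemma clairvoyant_tail_le {μ : ℝ} (hμ0 : 0 ≤ μ) (hμ1 : μ ≤ 1) (b : ℕ) :
    ∑' k : ℕ, poissonPMF μ (b + 1 + k) * b / (b + 1 + k) ≤ exp (-μ) * μ ^ b * b * factTail b := by
  have hnonneg (k : ℕ) : 0 ≤ poissonPMF μ (b + 1 + k) * b / (b + 1 + k) := by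
    rw [poissonPMF]; positivity
  rw [factTail, ← tsum_mul_left]
  exact ((summable_factTail b).mul_left _ |>.of_nonneg_of_le hnonneg
    (poissonPMF_mul_div_le hμ0 hμ1 b)).tsum_le_tsum (poissonPMF_mul_div_le hμ0 hμ1 b)
    ((summable_factTail b).mul_left _)

lemma tsum_exp_neg_one_div_factorial_mul_eq :
    ∑' k : ℕ, exp (-1) / ((k + 2)! * (k + 2)) = exp (-1) * factTail 1 := by
  rw [factTail, ← tsum_mul_left]
  congr 1 with k
  rw [show 1 + 1 + k = k + 2 by omega]
  push_cast
  ring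

theorem stmt_13 (b : ℕ) (hb : 1 ≤ b) (lam : ℝ) (hlam0 : 0 < lam) (hlam1 : lam ≤ 1) :
    poisCDF lam b / clairFair lam b
      ≥ (2 * Real.exp (-1)) /
          (2 * Real.exp (-1) + ∑' k : ℕ, Real.exp (-1) / (Nat.factorial (k + 2) * (k + 2))) := by
  set T := ∑' k : ℕ, poissonPMF lam (b + 1 + k) * b / (b + 1 + k) with hT
  set A := ∑ k ∈ range (b + 1), (1 : ℝ) / (k ! : ℝ)
  have hT0 : 0 ≤ T := tsum_nonneg fun k ↦ by rw [poissonPMF]; positivity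
  have hC := exp_neg_mul_pow_mul_sum_inv_factorial_le_poisCDF hlam0.le hlam1 b
  have hC0 : 0 < poisCDF lam b := lt_of_lt_of_le (by positivity) hC
  have h2T : 2 * T ≤ factTail 1 * poisCDF lam b :=
    calc 2 * T ≤ exp (-lam) * lam ^ b * (2 * b * factTail b) := by
          linarith [clairvoyant_tail_le hlam0.le hlam1 b]
      _ ≤ exp (-lam) * lam ^ b * (factTail 1 * A) :=
          mul_le_mul_of_nonneg_left (two_mul_factTail_le hb) (by positivity)
      _ = factTail 1 * (exp (-lam) * lam ^ b * A) := by ring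
      _ ≤ factTail 1 * poisCDF lam b := by gcongr; exact factTail_nonneg 1
  rw [tsum_exp_neg_one_div_factorial_mul_eq, mul_comm 2, ← mul_add,
    mul_div_mul_left _ _ (exp_ne_zero _), ge_iff_le, clairFair, ← hT,
    div_le_div_iff₀ (by linarith [factTail_nonneg 1]) (by linarith)]
  linarith
end
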